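/- Consistency of the logics L^A_CS: for every logic L^A (consisting of cl, j, j+ together with some subset of {j4, jd, jt}) and every constant specification CS for L^A, the logic L^A_CS is consistent, i.e. L^A_CS ⊬ ⊥. -/
import Mathlib


/-- Justification terms `Tm^A`: constants `c_i`, variables `x_i`, application
`·`, sum `+` and `!`. -/
inductive TmA : Type
  | const : ℕ → TmA
  | var : ℕ → TmA
  | app : TmA → TmA → TmA
  | plus : TmA → TmA → TmA
  | bang : TmA → TmA

/-- Formulas of `L_J^A`: atomic propositions, `⊥`, implication and `t:F`. -/
inductive FmlA : Type
  | atom : ℕ → FmlA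
  | bot : FmlA
  | imp : FmlA → FmlA → FmlA
  | just : TmA → FmlA → FmlA

namespace FmlA
/-- `¬A := A → ⊥`. -/
def neg (A : FmlA) : FmlA := A.imp .bot
/-- `A ∨ B := ¬A → B`. -/
def or' (A B : FmlA) : FmlA := A.neg.imp B
/-- `A ∧ B := ¬(A → ¬B)`. -/
def and' (A B : FmlA) : FmlA := (A.imp B.neg).neg
end FmlA

/-- Which of the optional axioms j4, jd, jt belong to the logic `L^A`. -/
structure FlagsA : Type where
  j4 : Bool
  jd : Bool
  jt : Bool

/-- The axioms of the logic `L^A`: classical propositional axioms, j, j+,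
together with the optional axioms j4, jd, jt as given by the flags. -/
inductive AAxiom (fl : FlagsA) : FmlA → Prop
  | cl1 (A B : FmlA) : AAxiom fl (A.imp (B.imp A))
  | cl2 (A B C : FmlA) :
      AAxiom fl ((A.imp (B.imp C)).imp ((A.imp B).imp (A.imp C)))
  | cl3 (A : FmlA) : AAxiom fl (A.neg.neg.imp A)
  | j (s t : TmA) (A B : FmlA) :
      AAxiom fl ((FmlA.just s (A.imp B)).imp
        ((FmlA.just t A).imp (FmlA.just (s.app t) B)))
  | jplus (s t : TmA) (A : FmlA) :
      AAxiom fl (((FmlA.just s A).or' (FmlA.just t A)).imp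
        (FmlA.just (s.plus t) A))
  | j4 (t : TmA) (A : FmlA) (h : fl.j4 = true) :
      AAxiom fl ((FmlA.just t A).imp (FmlA.just t.bang (FmlA.just t A)))
  | jd (t : TmA) (h : fl.jd = true) :
      AAxiom fl ((FmlA.just t FmlA.bot).imp FmlA.bot)
  | jt (t : TmA) (A : FmlA) (h : fl.jt = true) :
      AAxiom fl ((FmlA.just t A).imp A)

/-- `bangIterA n t = !…!t` with `n` occurrences of `!`. -/
def bangIterA : ℕ → TmA → TmA
  | 0, t => t
  | n + 1, t => (bangIterA n t).bang

/-- `anFmlA c A n = !…!c : !…!c : … : !c : c : A` (with `n, n-1, …, 1, 0` bangs). -/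
def anFmlA (c : TmA) (A : FmlA) : ℕ → FmlA
  | 0 => FmlA.just c A
  | n + 1 => FmlA.just (bangIterA (n + 1) c) (anFmlA c A n)

/-- A constant specification for `L^A`: a set of pairs `(c, A)` where `c` is a
constant and `A` an axiom of `L^A`. -/
def IsCSA (fl : FlagsA) (CS : Set (ℕ × FmlA)) : Prop :=
  ∀ p ∈ CS, AAxiom fl p.2

/-- `CS` is axiomatically appropriate: every axiom has a constant justifying it. -/
def AxAppropriateA (fl : FlagsA) (CS : Set (ℕ × FmlA)) : Prop :=
  ∀ A : FmlA, AAxiom fl A → ∃ c : ℕ, (c, A) ∈ CS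

/-- Hilbert-style derivability in `L^A_CS`: axioms of `L^A`, modus ponens, and
axiom necessitation. -/
inductive DerivA (fl : FlagsA) (CS : Set (ℕ × FmlA)) : FmlA → Prop
  | ax {A : FmlA} : AAxiom fl A → DerivA fl CS A
  | mp {A B : FmlA} : DerivA fl CS (A.imp B) → DerivA fl CS A → DerivA fl CS B
  | an {c : ℕ} {A : FmlA} (n : ℕ) (h : (c, A) ∈ CS) :
      DerivA fl CS (anFmlA (TmA.const c) A n)

/-- An `L^A_CS`-subset model `(W, W0, V, E)`; `V ω F` encodes `V(ω,F) = 1`. -/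
structure AModel (fl : FlagsA) (CS : Set (ℕ × FmlA)) (W : Type*) : Type _ where
  W0 : Set W
  V : W → FmlA → Prop
  E : W → TmA → Set W
  w0_nonempty : W0.Nonempty
  v_bot : ∀ ω ∈ W0, ¬ V ω FmlA.bot
  v_imp : ∀ ω ∈ W0, ∀ F G : FmlA, V ω (F.imp G) ↔ (¬ V ω F ∨ V ω G)
  v_just : ∀ ω ∈ W0, ∀ (t : TmA) (F : FmlA),
      V ω (FmlA.just t F) ↔ E ω t ⊆ {υ | V υ F}
  e_plus : ∀ ω ∈ W0, ∀ s t : TmA, E ω (s.plus t) ⊆ E ω s ∩ E ω t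
  e_app : ∀ ω ∈ W0, ∀ s t : TmA,
      E ω (s.app t) ⊆ {υ | ∀ F : FmlA,
        (∃ H : FmlA, E ω s ⊆ {x | V x (H.imp F)} ∧ E ω t ⊆ {x | V x H}) →
          V υ F}
  e_jd : fl.jd = true → ∀ ω ∈ W0, ∀ t : TmA, ∃ υ ∈ W0, υ ∈ E ω t
  e_jt : fl.jt = true → ∀ ω ∈ W0, ∀ t : TmA, ω ∈ E ω t
  e_j4 : fl.j4 = true → ∀ ω ∈ W0, ∀ t : TmA,
      E ω t.bang ⊆ {υ | ∀ F : FmlA, V ω (FmlA.just t F) → V υ (FmlA.just t F)}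
  e_cs : ∀ ω ∈ W0, ∀ (c : ℕ) (A : FmlA), (c, A) ∈ CS →
      E ω (TmA.const c) ⊆ {υ | V υ A}
  e_cs_bang : ∀ ω ∈ W0, ∀ (c : ℕ) (A : FmlA), (c, A) ∈ CS → ∀ n : ℕ,
      E ω (bangIterA (n + 1) (TmA.const c)) ⊆
        {υ | V υ (anFmlA (TmA.const c) A n)}

/-- A degenerate valuation: `just t F` is true iff `F` is. -/
def fval : FmlA → Prop
  | FmlA.atom _ => True
  | FmlA.bot => False
  | FmlA.imp A B => fval A → fval B
  | FmlA.just _ A => fval A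

lemma fval_anFmlA (c : TmA) (A : FmlA) : ∀ n, fval (anFmlA c A n) ↔ fval A := by
  intro n
  induction n with
  | zero => rfl
  | succ n ih => simpa [anFmlA, fval] using ih

lemma fval_axiom {fl : FlagsA} {A : FmlA} (h : AAxiom fl A) : fval A := by
  induction h with
  | cl1 A B => exact fun a _ => a
  | cl2 A B C => exact fun f g a => f a (g a)
  | cl3 A => intro h; by_contra hA; exact h hA
  | j s t A B => exact fun f a => f a
  | jplus s t A =>
      intro h
      simp only [fval, FmlA.or', FmlA.neg] at h ⊢
      by_cases hs : fval (FmlA.just s A)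
      · exact hs
      · exact h hs
  | j4 t A _ => exact fun a => a
  | jd t _ => exact fun a => a
  | jt t A _ => exact fun a => a

lemma fval_deriv {fl : FlagsA} {CS : Set (ℕ × FmlA)} (hCS : IsCSA fl CS)
    {A : FmlA} (h : DerivA fl CS A) : fval A := by
  induction h with
  | ax hax => exact fval_axiom hax
  | mp _ _ ih1 ih2 => exact ih1 ih2
  | an n hmem => exact (fval_anFmlA _ _ n).mpr (fval_axiom (hCS _ hmem))

/-- **Consistency of the logics `L^A_CS`**: for every logic `L^A` and every
constant specification `CS` for `L^A`, `L^A_CS ⊬ ⊥`. -/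
theorem logics_A_consistent (fl : FlagsA) (CS : Set (ℕ × FmlA))
    (hCS : IsCSA fl CS) : ¬ DerivA fl CS FmlA.bot := by
  intro h
  exact fval_deriv hCS h
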